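/- For any positive even integer n, det[F_{j+k} + δ_{jk}]_{1≤j,k≤n} = F_{n+1}^2 and det[L_{j+k} + δ_{jk}]_{1≤j,k≤n} = L_{n+1}^2, where F and L are the Fibonacci and Lucas numbers. -/
import Mathlib

def lucasL : ℕ → ℤ
  | 0 => 2
  | 1 => 1
  | n + 2 => lucasL (n + 1) + lucasL n

lemma fibz_add_two (k : ℕ) : ((Nat.fib (k+2) : ℤ)) = Nat.fib (k+1) + Nat.fib k := by
  rw [Nat.fib_add_two]; push_cast; ring

lemma cassini : ∀ k : ℕ, ((Nat.fib (k+1) : ℤ))^2 - Nat.fib (k+2) * Nat.fib k = (-1)^k := by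
  intro k
  induction k with
  | zero => simp
  | succ m ih =>
      rw [pow_succ (-1 : ℤ) m, ← ih, fibz_add_two (m+1), fibz_add_two m]
      ring

lemma sum1 (n : ℕ) : ∑ k ∈ Finset.range n, ((Nat.fib (k+1) : ℤ))^2
    = Nat.fib n * Nat.fib (n+1) := by
  induction n with
  | zero => simp
  | succ m ih =>
      rw [Finset.sum_range_succ, ih, fibz_add_two m]; ring

lemma sum0 (n : ℕ) : ∑ k ∈ Finset.range n, ((Nat.fib k : ℤ))^2
    = Nat.fib n * Nat.fib (n+1) - ((Nat.fib n : ℤ))^2 := by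
  induction n with
  | zero => simp
  | succ m ih =>
      rw [Finset.sum_range_succ, ih, fibz_add_two m]; ring

lemma sumA2 (n : ℕ) : ∑ k ∈ Finset.range n, 2*((Nat.fib k : ℤ) * Nat.fib (k+1))
    = 2*((Nat.fib n : ℤ))^2 - 1 + (-1)^n := by
  induction n with
  | zero => simp
  | succ m ih =>
      rw [Finset.sum_range_succ, ih, pow_succ (-1 : ℤ) m]
      have := cassini m
      rw [fibz_add_two m] at this
      linear_combination (-2 : ℤ) * this

lemma sumA (n : ℕ) (h : Even n) : ∑ k ∈ Finset.range n, (Nat.fib k : ℤ) * Nat.fib (k+1)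
    = ((Nat.fib n : ℤ))^2 := by
  have h2 := sumA2 n
  rw [h.neg_one_pow] at h2
  rw [← Finset.mul_sum] at h2
  linarith

lemma lucas_fib : ∀ k : ℕ, lucasL (k+1) = 2*(Nat.fib k : ℤ) + Nat.fib (k+1) := by
  intro k
  induction k using Nat.twoStepInduction with
  | zero => simp [lucasL]
  | one => simp [lucasL, Nat.fib]
  | more m ih1 ih2 =>
      show lucasL (m+1+1+1) = _
      rw [show m+1+1+1 = (m+1) + 2 from rfl, lucasL, ih1, ih2,
        fibz_add_two (m+1), fibz_add_two m]
      ring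

lemma lucas_entry (j : ℕ) : ∀ k : ℕ,
    lucasL (j + k + 2) = lucasL (j+2) * Nat.fib (k+1) + lucasL (j+1) * Nat.fib k := by
  intro k
  induction k using Nat.twoStepInduction with
  | zero => simp
  | one => show lucasL (j + 1 + 2) = _; rw [lucasL]; simp [Nat.fib]
  | more m ih1 ih2 =>
      have e : j + (m+2) + 2 = (j + m + 2) + 2 := by ring
      rw [e, lucasL, show j + m + 2 + 1 = j + (m+1) + 2 from by ring, ih1, ih2,
        fibz_add_two (m+1), fibz_add_two m]
      ring

theorem stmt_19 (n : ℕ) (hn : 0 < n) (hev : Even n) :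
    Matrix.det (Matrix.of fun j k : Fin n =>
        (Nat.fib (((j : ℕ) + 1) + ((k : ℕ) + 1)) : ℤ) + (if j = k then 1 else 0)) =
        (Nat.fib (n + 1) : ℤ) ^ 2 ∧
    Matrix.det (Matrix.of fun j k : Fin n =>
        lucasL (((j : ℕ) + 1) + ((k : ℕ) + 1)) + (if j = k then 1 else 0)) =
        lucasL (n + 1) ^ 2 := by
  set a : ℤ := (Nat.fib n : ℤ) with ha
  set b : ℤ := (Nat.fib (n+1) : ℤ) with hb
  have hc : b^2 - (b + a) * a = 1 := by
    have := cassini n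
    rw [hev.neg_one_pow, fibz_add_two n] at this
    linarith [this]
  -- the four basic sums (for even n)
  have hS1 : ∑ k ∈ Finset.range n, ((Nat.fib (k+1) : ℤ))^2 = a * b := sum1 n
  have hS0 : ∑ k ∈ Finset.range n, ((Nat.fib k : ℤ))^2 = a * b - a^2 := sum0 n
  have hSA : ∑ k ∈ Finset.range n, (Nat.fib k : ℤ) * Nat.fib (k+1) = a^2 := sumA n hev
  constructor
  · -- Fibonacci matrix
    set U : Matrix (Fin n) (Fin 2) ℤ :=
      Matrix.of fun j i => ![(Nat.fib ((j : ℕ)+1) : ℤ), (Nat.fib ((j : ℕ)+2) : ℤ)] i with hU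
    set V : Matrix (Fin 2) (Fin n) ℤ :=
      Matrix.of fun i k => ![(Nat.fib (k : ℕ) : ℤ), (Nat.fib ((k : ℕ)+1) : ℤ)] i with hV
    have hM : (Matrix.of fun j k : Fin n =>
        (Nat.fib (((j : ℕ) + 1) + ((k : ℕ) + 1)) : ℤ) + (if j = k then 1 else 0))
        = 1 + U * V := by
      ext j k
      have : ((j : ℕ) + 1) + ((k : ℕ) + 1) = ((j : ℕ) + 1) + (k : ℕ) + 1 := by ring
      simp only [Matrix.of_apply, Matrix.add_apply, Matrix.one_apply, Matrix.mul_apply,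
        Fin.sum_univ_two, hU, hV, this, Nat.fib_add,
        Matrix.cons_val_zero, Matrix.cons_val_one, Matrix.head_cons]
      push_cast
      split <;> ring
    rw [hM, Matrix.det_one_add_mul_comm, Matrix.det_fin_two]
    simp only [Matrix.add_apply, Matrix.one_apply, Matrix.mul_apply, Matrix.of_apply, hU, hV,
      Matrix.cons_val_zero, Matrix.cons_val_one, Matrix.head_cons]
    rw [Fin.sum_univ_eq_sum_range (fun k => ((Nat.fib k : ℤ)) * Nat.fib (k+1)),
      Fin.sum_univ_eq_sum_range (fun k => ((Nat.fib k : ℤ)) * Nat.fib (k+2)),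
      Fin.sum_univ_eq_sum_range (fun k => ((Nat.fib (k+1) : ℤ)) * Nat.fib (k+1)),
      Fin.sum_univ_eq_sum_range (fun k => ((Nat.fib (k+1) : ℤ)) * Nat.fib (k+2))]
    have e1 : ∑ k ∈ Finset.range n, ((Nat.fib k : ℤ)) * Nat.fib (k+2) = a * b := by
      have : ∀ k ∈ Finset.range n, ((Nat.fib k : ℤ)) * Nat.fib (k+2)
          = ((Nat.fib k : ℤ))^2 + (Nat.fib k : ℤ) * Nat.fib (k+1) := by
        intro k _; rw [fibz_add_two k]; ring
      rw [Finset.sum_congr rfl this, Finset.sum_add_distrib, hS0, hSA]; ring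
    have e2 : ∑ k ∈ Finset.range n, ((Nat.fib (k+1) : ℤ)) * Nat.fib (k+1) = a * b := by
      simpa [sq] using hS1
    have e3 : ∑ k ∈ Finset.range n, ((Nat.fib (k+1) : ℤ)) * Nat.fib (k+2) = a * b + a^2 := by
      have : ∀ k ∈ Finset.range n, ((Nat.fib (k+1) : ℤ)) * Nat.fib (k+2)
          = ((Nat.fib (k+1) : ℤ))^2 + (Nat.fib k : ℤ) * Nat.fib (k+1) := by
        intro k _; rw [fibz_add_two k]; ring
      rw [Finset.sum_congr rfl this, Finset.sum_add_distrib, hS1, hSA]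
    rw [hSA, e1, e2, e3]
    norm_num
    linear_combination (-(1:ℤ) - a^2) * hc
  · -- Lucas matrix
    set U : Matrix (Fin n) (Fin 2) ℤ :=
      Matrix.of fun j i => ![lucasL ((j : ℕ)+2), lucasL ((j : ℕ)+1)] i with hU
    set V : Matrix (Fin 2) (Fin n) ℤ :=
      Matrix.of fun i k => ![(Nat.fib ((k : ℕ)+1) : ℤ), (Nat.fib (k : ℕ) : ℤ)] i with hV
    have hM : (Matrix.of fun j k : Fin n =>
        lucasL (((j : ℕ) + 1) + ((k : ℕ) + 1)) + (if j = k then 1 else 0))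
        = 1 + U * V := by
      ext j k
      have e : ((j : ℕ) + 1) + ((k : ℕ) + 1) = (j : ℕ) + (k : ℕ) + 2 := by ring
      simp only [Matrix.of_apply, Matrix.add_apply, Matrix.one_apply, Matrix.mul_apply,
        Fin.sum_univ_two, hU, hV, e, lucas_entry (j : ℕ) (k : ℕ),
        Matrix.cons_val_zero, Matrix.cons_val_one, Matrix.head_cons]
      split <;> ring
    rw [hM, Matrix.det_one_add_mul_comm, Matrix.det_fin_two]
    simp only [Matrix.add_apply, Matrix.one_apply, Matrix.mul_apply, Matrix.of_apply, hU, hV,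
      Matrix.cons_val_zero, Matrix.cons_val_one, Matrix.head_cons]
    rw [Fin.sum_univ_eq_sum_range (fun k => ((Nat.fib (k+1) : ℤ)) * lucasL (k+2)),
      Fin.sum_univ_eq_sum_range (fun k => ((Nat.fib (k+1) : ℤ)) * lucasL (k+1)),
      Fin.sum_univ_eq_sum_range (fun k => ((Nat.fib k : ℤ)) * lucasL (k+2)),
      Fin.sum_univ_eq_sum_range (fun k => ((Nat.fib k : ℤ)) * lucasL (k+1))]
    have l2 : ∀ k : ℕ, lucasL (k+2) = 3*(Nat.fib (k+1) : ℤ) + Nat.fib k := by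
      intro k
      rw [show k+2 = (k+1)+1 from rfl, lucas_fib (k+1), fibz_add_two k]; ring
    have e1 : ∑ k ∈ Finset.range n, ((Nat.fib (k+1) : ℤ)) * lucasL (k+2) = 3*(a*b) + a^2 := by
      have : ∀ k ∈ Finset.range n, ((Nat.fib (k+1) : ℤ)) * lucasL (k+2)
          = 3*((Nat.fib (k+1) : ℤ))^2 + (Nat.fib k : ℤ) * Nat.fib (k+1) := by
        intro k _; rw [l2 k]; ring
      rw [Finset.sum_congr rfl this, Finset.sum_add_distrib, ← Finset.mul_sum, hS1, hSA]
    have e2 : ∑ k ∈ Finset.range n, ((Nat.fib (k+1) : ℤ)) * lucasL (k+1) = 2*a^2 + a*b := by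
      have : ∀ k ∈ Finset.range n, ((Nat.fib (k+1) : ℤ)) * lucasL (k+1)
          = 2*((Nat.fib k : ℤ) * Nat.fib (k+1)) + ((Nat.fib (k+1) : ℤ))^2 := by
        intro k _; rw [lucas_fib k]; ring
      rw [Finset.sum_congr rfl this, Finset.sum_add_distrib, ← Finset.mul_sum, hSA, hS1]
    have e3 : ∑ k ∈ Finset.range n, ((Nat.fib k : ℤ)) * lucasL (k+2) = 2*a^2 + a*b := by
      have : ∀ k ∈ Finset.range n, ((Nat.fib k : ℤ)) * lucasL (k+2)
          = 3*((Nat.fib k : ℤ) * Nat.fib (k+1)) + ((Nat.fib k : ℤ))^2 := by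
        intro k _; rw [l2 k]; ring
      rw [Finset.sum_congr rfl this, Finset.sum_add_distrib, ← Finset.mul_sum, hSA, hS0]
      ring
    have e4 : ∑ k ∈ Finset.range n, ((Nat.fib k : ℤ)) * lucasL (k+1) = 2*(a*b) - a^2 := by
      have : ∀ k ∈ Finset.range n, ((Nat.fib k : ℤ)) * lucasL (k+1)
          = 2*((Nat.fib k : ℤ))^2 + (Nat.fib k : ℤ) * Nat.fib (k+1) := by
        intro k _; rw [lucas_fib k]; ring
      rw [Finset.sum_congr rfl this, Finset.sum_add_distrib, ← Finset.mul_sum, hS0, hSA]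
      ring
    rw [e1, e2, e3, e4, lucas_fib n]
    norm_num
    linear_combination (5*a^2 - 1) * hc
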